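/- Let X be a positive real number. Then Σ_{d ≤ X} μ(d)·⌊X/d⌋² = (6/π²)X² + O(X log X) as X → ∞; equivalently, the number of pairs (p,q) of coprime positive integers with p, q ≤ X equals X²/ζ(2) + O(X log X). -/

import Mathlib

/-!
Möbius inversion of the coprimality indicator, `[gcd p q = 1] = ∑_{d ∣ p, d ∣ q} μ d`, turns the
count into `∑_{d ≤ X} μ d ⌊X/d⌋²`. Replacing `⌊X/d⌋²` by `(X/d)²` costs at most `2X/d` per term,
hence `O(X log X)` in total; and `X² ∑_{d ≤ X} μ d / d²` differs from
`X² ∑_d μ d / d² = X² / ζ(2) = 6X²/π²` by at most `X² ∑_{d > X} d⁻² = O(X)`.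
-/

open Finset ArithmeticFunction
open scoped Real ArithmeticFunction.Moebius

theorem sum_divisors_moebius (n : ℕ) : ∑ d ∈ n.divisors, μ d = if n = 1 then 1 else 0 := by
  have h := congr($(moebius_mul_coe_zeta) n)
  simp only [coe_mul_zeta_apply, one_apply] at h
  exact h

theorem filter_dvd_Icc_eq_divisors {n N : ℕ} (hn : n ≠ 0) (hnN : n ≤ N) :
    {d ∈ Icc 1 N | d ∣ n} = n.divisors := by
  ext d
  simp only [mem_filter, mem_Icc, Nat.mem_divisors, and_iff_left hn]
  refine ⟨And.right, fun hd => ⟨⟨Nat.pos_of_dvd_of_pos hd (Nat.pos_of_ne_zero hn), ?_⟩, hd⟩⟩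
  exact (Nat.le_of_dvd (Nat.pos_of_ne_zero hn) hd).trans hnN

theorem card_coprime_pairs_eq_sum_moebius (N : ℕ) :
    (#{pq ∈ Icc 1 N ×ˢ Icc 1 N | pq.1.gcd pq.2 = 1} : ℤ) =
      ∑ d ∈ Icc 1 N, μ d * ((N / d : ℕ) : ℤ) ^ 2 := by
  have hcoprime : ∀ pq ∈ Icc 1 N ×ˢ Icc 1 N, (if pq.1.gcd pq.2 = 1 then 1 else 0 : ℤ) =
      ∑ d ∈ Icc 1 N, if d ∣ pq.1 ∧ d ∣ pq.2 then μ d else 0 := by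
    rintro ⟨p, q⟩ hpq
    simp only [mem_product, mem_Icc] at hpq
    have hgcd : p.gcd q ≠ 0 := Nat.gcd_ne_zero_left (by omega)
    simp_rw [← sum_filter, ← Nat.dvd_gcd_iff, filter_dvd_Icc_eq_divisors hgcd
      ((Nat.gcd_le_left q (by omega)).trans hpq.1.2), sum_divisors_moebius]
  have hmultiples : ∀ d, #{pq ∈ Icc 1 N ×ˢ Icc 1 N | d ∣ pq.1 ∧ d ∣ pq.2} = (N / d) ^ 2 := by
    intro d
    rw [filter_product, card_product, sq, ← Nat.Ioc_filter_dvd_card_eq_div]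
    rfl
  calc (#{pq ∈ Icc 1 N ×ˢ Icc 1 N | pq.1.gcd pq.2 = 1} : ℤ)
      = ∑ pq ∈ Icc 1 N ×ˢ Icc 1 N, if pq.1.gcd pq.2 = 1 then 1 else 0 := (sum_boole _ _).symm
    _ = ∑ d ∈ Icc 1 N, ∑ pq ∈ Icc 1 N ×ˢ Icc 1 N, if d ∣ pq.1 ∧ d ∣ pq.2 then μ d else 0 := by
      rw [sum_congr rfl hcoprime, sum_comm]
    _ = ∑ d ∈ Icc 1 N, μ d * ((N / d : ℕ) : ℤ) ^ 2 := by
      simp_rw [← sum_filter, sum_const, hmultiples, nsmul_eq_mul, mul_comm]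
      push_cast
      rfl

theorem abs_natFloor_sq_sub_sq_le {x : ℝ} (hx : 0 ≤ x) : |(⌊x⌋₊ : ℝ) ^ 2 - x ^ 2| ≤ 2 * x := by
  have hle := Nat.floor_le hx
  have hlt := Nat.lt_floor_add_one x
  rw [abs_sub_comm, abs_of_nonneg (by nlinarith)]
  nlinarith

-- At `n = 0` the hypothesis reads `|f 0| ≤ 0⁻¹ = 0`.
theorem abs_tsum_sub_sum_range_le {f : ℕ → ℝ} (hf : ∀ n, |f n| ≤ ((n : ℝ) ^ 2)⁻¹) (N : ℕ) :
    |∑' n, f n - ∑ n ∈ range (N + 1), f n| ≤ 2 / (N + 1 : ℝ) := by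
  have hinv : Summable fun n : ℕ => ((n : ℝ) ^ 2)⁻¹ := Real.summable_nat_pow_inv.mpr one_lt_two
  have htail : Summable fun i : ℕ => (((i + (N + 1) : ℕ) : ℝ) ^ 2)⁻¹ :=
    hinv.comp_injective (add_left_injective (N + 1))
  rw [← (Summable.of_norm_bounded hinv hf).sum_add_tsum_nat_add (N + 1), add_sub_cancel_left]
  refine (tsum_of_norm_bounded (f := fun i => f (i + (N + 1))) htail.hasSum
    fun i => hf _).trans ?_
  refine Real.tsum_le_of_sum_range_le (fun _ => by positivity) fun M => ?_
  calc ∑ i ∈ range M, (((i + (N + 1) : ℕ) : ℝ) ^ 2)⁻¹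
      = ∑ d ∈ Ioo N (M + (N + 1)), ((d : ℝ) ^ 2)⁻¹ := by
        rw [range_eq_Ico, sum_Ico_add' (fun d : ℕ => ((d : ℝ) ^ 2)⁻¹), zero_add,
          Ico_add_one_left_eq_Ioo]
    _ ≤ 2 / (N + 1 : ℝ) := by exact_mod_cast sum_Ioo_inv_sq_le N _

theorem tsum_moebius_div_sq : ∑' n : ℕ, (μ n : ℝ) / n ^ 2 = 6 / π ^ 2 := by
  set S := ∑' n : ℕ, (μ n : ℝ) / n ^ 2
  have h2 : 1 < (2 : ℂ).re := by norm_num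
  have hL : LSeries (fun n => (μ n : ℂ)) 2 = S := by
    rw [Complex.ofReal_tsum, LSeries]
    refine tsum_congr fun n => ?_
    rcases eq_or_ne n 0 with rfl | hn
    · simp
    · rw [LSeries.term_of_ne_zero hn]
      push_cast
      norm_cast
  have hinverse := LSeries_zeta_mul_Lseries_moebius h2
  rw [LSeries_zeta_eq_riemannZeta h2, riemannZeta_two, hL] at hinverse
  have hpi : (π : ℂ) ≠ 0 := Complex.ofReal_ne_zero.mpr Real.pi_ne_zero
  apply Complex.ofReal_injective
  push_cast
  field_simp at hinverse ⊢
  linear_combination hinverse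

theorem abs_sum_moebius_div_sq_sub_le (N : ℕ) :
    |∑ d ∈ Icc 1 N, (μ d : ℝ) / d ^ 2 - 6 / π ^ 2| ≤ 2 / (N + 1 : ℝ) := by
  have hbound (n : ℕ) : |(μ n : ℝ) / n ^ 2| ≤ ((n : ℝ) ^ 2)⁻¹ := by
    rw [abs_div, abs_of_nonneg (by positivity : (0 : ℝ) ≤ n ^ 2), div_eq_mul_inv]
    exact mul_le_of_le_one_left (by positivity) (by exact_mod_cast abs_moebius_le_one)
  have hrange : ∑ n ∈ range (N + 1), (μ n : ℝ) / n ^ 2 = ∑ d ∈ Icc 1 N, (μ d : ℝ) / d ^ 2 := by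
    rw [range_eq_Ico, sum_eq_sum_Ico_succ_bot N.succ_pos, zero_add, Nat.succ_eq_add_one,
      Ico_add_one_right_eq_Icc]
    simp
  rw [abs_sub_comm, ← tsum_moebius_div_sq, ← hrange]
  exact abs_tsum_sub_sum_range_le hbound N

theorem abs_sum_moebius_mul_natFloor_sq_sub_le {X : ℝ} (hX : 1 ≤ X) :
    |∑ d ∈ Icc 1 ⌊X⌋₊, (μ d : ℝ) * (⌊X / d⌋₊ : ℝ) ^ 2 - 6 / π ^ 2 * X ^ 2|
      ≤ 2 * X * Real.log X + 4 * X := by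
  set N := ⌊X⌋₊
  have hfloor (d : ℕ) :
      |(μ d : ℝ) * (⌊X / d⌋₊ : ℝ) ^ 2 - μ d * (X / d) ^ 2| ≤ 2 * X * (d : ℝ)⁻¹ := by
    rw [← mul_sub, abs_mul]
    calc |(μ d : ℝ)| * |(⌊X / d⌋₊ : ℝ) ^ 2 - (X / d) ^ 2| ≤ 1 * (2 * (X / d)) := by
          gcongr
          · exact_mod_cast abs_moebius_le_one
          · exact abs_natFloor_sq_sub_sq_le (by positivity)
      _ = 2 * X * (d : ℝ)⁻¹ := by ring
  have hharmonic : ∑ d ∈ Icc 1 N, (d : ℝ)⁻¹ ≤ 1 + Real.log X := by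
    calc ∑ d ∈ Icc 1 N, (d : ℝ)⁻¹ = harmonic N := by push_cast [harmonic_eq_sum_Icc]; rfl
      _ ≤ 1 + Real.log N := harmonic_le_one_add_log N
      _ ≤ 1 + Real.log X := by
        gcongr
        · exact_mod_cast Nat.floor_pos.mpr hX
        · exact Nat.floor_le (by linarith)
  have hmain : |∑ d ∈ Icc 1 N, (μ d : ℝ) * (X / d) ^ 2 - 6 / π ^ 2 * X ^ 2| ≤ 2 * X := by
    have hfactor : ∑ d ∈ Icc 1 N, (μ d : ℝ) * (X / d) ^ 2 - 6 / π ^ 2 * X ^ 2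
        = X ^ 2 * (∑ d ∈ Icc 1 N, (μ d : ℝ) / d ^ 2 - 6 / π ^ 2) := by
      rw [mul_sub, mul_sum]
      congr 1
      · exact sum_congr rfl fun d _ => by ring
      · ring
    rw [hfactor, abs_mul, abs_of_nonneg (sq_nonneg X)]
    calc X ^ 2 * |∑ d ∈ Icc 1 N, (μ d : ℝ) / d ^ 2 - 6 / π ^ 2| ≤ X ^ 2 * (2 / (N + 1)) := by
          gcongr; exact abs_sum_moebius_div_sq_sub_le N
      _ ≤ 2 * X := by
        have := Nat.lt_floor_add_one X
        rw [mul_div_assoc', div_le_iff₀ (by positivity)]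
        nlinarith
  have hsplit : ∑ d ∈ Icc 1 N, (μ d : ℝ) * (⌊X / d⌋₊ : ℝ) ^ 2 - 6 / π ^ 2 * X ^ 2
      = ∑ d ∈ Icc 1 N, ((μ d : ℝ) * (⌊X / d⌋₊ : ℝ) ^ 2 - μ d * (X / d) ^ 2)
        + (∑ d ∈ Icc 1 N, (μ d : ℝ) * (X / d) ^ 2 - 6 / π ^ 2 * X ^ 2) := by
    rw [sum_sub_distrib]
    ring
  rw [hsplit]
  calc _ ≤ ∑ d ∈ Icc 1 N, 2 * X * (d : ℝ)⁻¹ + 2 * X :=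
        (abs_add_le _ _).trans <|
          add_le_add ((abs_sum_le_sum_abs _ _).trans (sum_le_sum fun d _ => hfloor d)) hmain
    _ ≤ 2 * X * Real.log X + 4 * X := by
      rw [← mul_sum]
      nlinarith

theorem coprime_pairs_count_asymptotic :
    ∃ C : ℝ, 0 < C ∧ ∃ X₀ : ℝ, ∀ X : ℝ, X₀ ≤ X →
      |((((Finset.Icc 1 ⌊X⌋₊) ×ˢ (Finset.Icc 1 ⌊X⌋₊)).filter
            (fun pq => Nat.gcd pq.1 pq.2 = 1)).card : ℝ)
          - (6 / Real.pi ^ 2) * X ^ 2|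
        ≤ C * X * Real.log X := by
  refine ⟨6, by norm_num, 3, fun X hX => ?_⟩
  have hlog : 1 ≤ Real.log X := by
    rw [Real.le_log_iff_exp_le (by linarith)]
    linarith [Real.exp_one_lt_d9]
  have hcount : (#{pq ∈ Icc 1 ⌊X⌋₊ ×ˢ Icc 1 ⌊X⌋₊ | pq.1.gcd pq.2 = 1} : ℝ)
      = ∑ d ∈ Icc 1 ⌊X⌋₊, (μ d : ℝ) * (⌊X / d⌋₊ : ℝ) ^ 2 := by
    simp_rw [Nat.floor_div_natCast]
    have h := congrArg (Int.cast : ℤ → ℝ) (card_coprime_pairs_eq_sum_moebius ⌊X⌋₊)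
    push_cast at h
    exact h
  rw [hcount]
  calc _ ≤ 2 * X * Real.log X + 4 * X := abs_sum_moebius_mul_natFloor_sq_sub_le (by linarith)
    _ ≤ 6 * X * Real.log X := by nlinarith
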